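/- Let G₁ and G₂ be finite families of continuous functions ℝ → ℝ with |G₁| and |G₂| odd, such that any two distinct members of G₁ ∪ G₂ cross exactly once. For i ∈ {1, 2} let kᵢ = (|Gᵢ| + 1)/2 and let λᵢ(x) denote the kᵢ-th largest value of the multiset {g(x) : g ∈ Gᵢ} (the median level of Gᵢ). Then there exists x ∈ ℝ with λ₁(x) = λ₂(x), i.e., the median levels of the two pseudo-line families have a common point. -/

import Mathlib

noncomputable local instance : DecidableEq (ℝ → ℝ) := Classical.decEq _

/-- `Prec f g` (written `f ≺ g`): the pseudo-lines `f` and `g` cross exactly once,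
at a point `x₀` with `f x > g x` for all `x < x₀` and `f x < g x` for all `x > x₀`. -/
def Prec (f g : ℝ → ℝ) : Prop :=
  ∃ x₀ : ℝ, f x₀ = g x₀ ∧ (∀ x < x₀, g x < f x) ∧ (∀ x > x₀, f x < g x)

/-- Two pseudo-lines cross exactly once. -/
def CrossesOnce (f g : ℝ → ℝ) : Prop :=
  Prec f g ∨ Prec g f

/-- The `k`-th largest element of a finite multiset of reals
(`k` is `1`-based; it is the entry of index `card − k` in the
ascending sorted list). -/
noncomputable def kthLargest (s : Multiset ℝ) (k : ℕ) : ℝ :=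
  (s.sort (· ≤ ·)).getD (Multiset.card s - k) 0

/-!
Far to the right of all crossing points the members of a family are ordered as at `+∞`, and far
to the left in the reverse order. The median of an odd family is characterized by counting the
members above and below it, a condition symmetric under reversing the order; hence one member
`gᵢ ∈ Gᵢ` realizes the median level `λᵢ` both at some `a` far to the right and at some `b` far to
the left. As `g₁` and `g₂` are in opposite order at `a` and at `b`, the function `λ₁ - λ₂`, which
is continuous because order statistics are `1`-Lipschitz in the sup norm, changes sign between
`b` and `a`.
-/

namespace List.SortedLE

variable {α : Type*} [LinearOrder α] {l : List α}

theorem countP_lt_getElem_le (hl : l.SortedLE) (i : ℕ) (hi : i < l.length) :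
    l.countP (· < l[i]) ≤ i := by
  have hsplit : l.countP (· < l[i]) =
      (l.take i).countP (· < l[i]) + (l.drop i).countP (· < l[i]) := by
    rw [← countP_append, take_append_drop]
  have hdrop : (l.drop i).countP (· < l[i]) = 0 := by
    simp only [countP_eq_zero, decide_eq_true_eq, not_lt, mem_drop_iff_getElem]
    rintro _ ⟨j, hj, rfl⟩
    exact hl.getElem_le_getElem_of_le (by omega)
  have htake := (l.take i).countP_le_length (p := (· < l[i]))
  rw [length_take] at htake
  omega

theorem countP_getElem_lt_lt (hl : l.SortedLE) (i : ℕ) (hi : i < l.length) :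
    l.countP (l[i] < ·) < l.length - i := by
  have hsplit : l.countP (l[i] < ·) =
      (l.take (i + 1)).countP (l[i] < ·) + (l.drop (i + 1)).countP (l[i] < ·) := by
    rw [← countP_append, take_append_drop]
  have htake : (l.take (i + 1)).countP (l[i] < ·) = 0 := by
    simp only [countP_eq_zero, decide_eq_true_eq, not_lt, mem_take_iff_getElem]
    rintro _ ⟨j, hj, rfl⟩
    exact hl.getElem_le_getElem_of_le (by omega)
  have hdrop := (l.drop (i + 1)).countP_le_length (p := (l[i] < ·))
  rw [length_drop] at hdrop
  omega

end List.SortedLE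

theorem Multiset.countP_mono_left {α : Type*} {s : Multiset α} {p q : α → Prop}
    [DecidablePred p] [DecidablePred q] (h : ∀ a ∈ s, p a → q a) :
    s.countP p ≤ s.countP q :=
  Quotient.inductionOn s (fun l h => by simpa using List.countP_mono_left (by simpa using h)) h

open Filter Topology Set

section KthLargest

variable {s : Multiset ℝ} {k : ℕ}

theorem kthLargest_eq_getElem (hk : 1 ≤ k) (hks : k ≤ Multiset.card s) :
    kthLargest s k =
      (s.sort (· ≤ ·))[Multiset.card s - k]'(by rw [Multiset.length_sort]; omega) :=
  List.getD_eq_getElem _ _ _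

theorem kthLargest_mem (hk : 1 ≤ k) (hks : k ≤ Multiset.card s) : kthLargest s k ∈ s := by
  rw [kthLargest_eq_getElem hk hks, ← Multiset.mem_sort (· ≤ ·)]
  exact List.getElem_mem _

theorem countP_lt_kthLargest_le (hk : 1 ≤ k) (hks : k ≤ Multiset.card s) :
    s.countP (· < kthLargest s k) ≤ Multiset.card s - k := by
  have := (Multiset.pairwise_sort s (· ≤ ·)).sortedLE.countP_lt_getElem_le (Multiset.card s - k)
    (by rw [Multiset.length_sort]; omega)
  rwa [← kthLargest_eq_getElem hk hks, ← Multiset.coe_countP, Multiset.sort_eq] at this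

theorem countP_kthLargest_lt_lt (hk : 1 ≤ k) (hks : k ≤ Multiset.card s) :
    s.countP (kthLargest s k < ·) < k := by
  have := (Multiset.pairwise_sort s (· ≤ ·)).sortedLE.countP_getElem_lt_lt (Multiset.card s - k)
    (by rw [Multiset.length_sort]; omega)
  rwa [← kthLargest_eq_getElem hk hks, ← Multiset.coe_countP, Multiset.sort_eq,
    Multiset.length_sort, Nat.sub_sub_self hks] at this

theorem kthLargest_le_of_countP_lt (hk : 1 ≤ k) (hks : k ≤ Multiset.card s) {y : ℝ}
    (h : s.countP (y < ·) < k) : kthLargest s k ≤ y := by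
  by_contra! hy
  have hsplit := Multiset.card_eq_countP_add_countP (· < kthLargest s k) s
  have hbelow := countP_lt_kthLargest_le hk hks
  have habove : s.countP (fun z => ¬ z < kthLargest s k) ≤ s.countP (y < ·) :=
    Multiset.countP_mono_left fun z _ hz => hy.trans_le (not_lt.mp hz)
  omega

theorem le_kthLargest_of_countP_le (hk : 1 ≤ k) (hks : k ≤ Multiset.card s) {y : ℝ}
    (h : s.countP (· < y) ≤ Multiset.card s - k) : y ≤ kthLargest s k := by
  by_contra! hy
  have hsplit := Multiset.card_eq_countP_add_countP (kthLargest s k < ·) s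
  have habove := countP_kthLargest_lt_lt hk hks
  have hbelow : s.countP (fun z => ¬ kthLargest s k < z) ≤ s.countP (· < y) :=
    Multiset.countP_mono_left fun z _ hz => (not_lt.mp hz).trans_lt hy
  omega

theorem eq_kthLargest_median_iff (hs : Odd (Multiset.card s)) {y : ℝ} :
    y = kthLargest s ((Multiset.card s + 1) / 2) ↔
      s.countP (y < ·) ≤ Multiset.card s / 2 ∧ s.countP (· < y) ≤ Multiset.card s / 2 := by
  obtain ⟨r, hr⟩ := hs
  have hk : 1 ≤ (Multiset.card s + 1) / 2 := by omega
  have hks : (Multiset.card s + 1) / 2 ≤ Multiset.card s := by omega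
  constructor
  · rintro rfl
    have habove := countP_kthLargest_lt_lt hk hks
    have hbelow := countP_lt_kthLargest_le hk hks
    omega
  · rintro ⟨habove, hbelow⟩
    exact le_antisymm (le_kthLargest_of_countP_le hk hks (by omega))
      (kthLargest_le_of_countP_lt hk hks (by omega))

theorem kthLargest_map_le_add {ι : Type*} {t : Multiset ι} {f g : ι → ℝ} {ε : ℝ}
    (hk : 1 ≤ k) (hkt : k ≤ Multiset.card t) (h : ∀ i ∈ t, f i ≤ g i + ε) :
    kthLargest (t.map f) k ≤ kthLargest (t.map g) k + ε := by
  refine kthLargest_le_of_countP_lt hk (by rwa [Multiset.card_map]) ?_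
  calc (t.map f).countP (kthLargest (t.map g) k + ε < ·)
      ≤ (t.map g).countP (kthLargest (t.map g) k < ·) := by
        simp only [Multiset.countP_map, ← Multiset.countP_eq_card_filter]
        exact Multiset.countP_mono_left fun i hi hlt => by linarith [h i hi]
    _ < k := countP_kthLargest_lt_lt hk (by rwa [Multiset.card_map])

theorem dist_kthLargest_map_le {ι : Type*} {t : Multiset ι} {f g : ι → ℝ} {ε : ℝ}
    (hk : 1 ≤ k) (hkt : k ≤ Multiset.card t) (h : ∀ i ∈ t, dist (f i) (g i) ≤ ε) :
    dist (kthLargest (t.map f) k) (kthLargest (t.map g) k) ≤ ε := by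
  simp only [Real.dist_eq, abs_sub_le_iff] at h ⊢
  have hfg := kthLargest_map_le_add hk hkt fun i hi => (by linarith [(h i hi).1] : f i ≤ g i + ε)
  have hgf := kthLargest_map_le_add hk hkt fun i hi => (by linarith [(h i hi).2] : g i ≤ f i + ε)
  constructor <;> linarith

theorem continuous_kthLargest {X : Type*} [TopologicalSpace X] {G : Finset (X → ℝ)}
    (hG : ∀ g ∈ G, Continuous g) (hk : 1 ≤ k) (hkG : k ≤ G.card) :
    Continuous fun x => kthLargest (G.val.map fun g => g x) k := by
  refine continuous_iff_continuousAt.mpr fun a => Metric.tendsto_nhds.mpr fun ε hε => ?_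
  have hnear : ∀ᶠ x in 𝓝 a, ∀ g ∈ G, dist (g x) (g a) < ε / 2 :=
    (eventually_all_finset G).mpr fun g hg =>
      Metric.tendsto_nhds.mp ((hG g hg).tendsto a) _ (half_pos hε)
  filter_upwards [hnear] with x hx
  exact (dist_kthLargest_map_le hk hkG fun g hg => (hx g hg).le).trans_lt (half_lt_self hε)

end KthLargest

theorem Prec.eventually_lt_atTop {f g : ℝ → ℝ} (h : Prec f g) : ∀ᶠ x in atTop, f x < g x := by
  obtain ⟨x₀, -, -, hright⟩ := h
  exact (eventually_gt_atTop x₀).mono hright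

theorem Prec.eventually_lt_atBot {f g : ℝ → ℝ} (h : Prec f g) : ∀ᶠ x in atBot, g x < f x := by
  obtain ⟨x₀, -, hleft, -⟩ := h
  exact (Filter.eventually_lt_atBot x₀).mono hleft

theorem Finset.eventually_forall_lt_iff {α β : Type*} [Preorder β] {l : Filter α} [l.NeBot]
    {U : Finset (α → β)} {R : (α → β) → (α → β) → Prop}
    (hR : ∀ f g, R f g → ∀ᶠ x in l, f x < g x)
    (htotal : ∀ f ∈ U, ∀ g ∈ U, f ≠ g → R f g ∨ R g f) :
    ∀ᶠ x in l, ∀ f ∈ U, ∀ g ∈ U, (f x < g x ↔ R f g) := by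
  have hasymm : ∀ f g, R f g → ¬ R g f := fun f g hfg hgf =>
    (((hR f g hfg).and (hR g f hgf)).exists).elim fun _ hx => lt_asymm hx.1 hx.2
  refine (eventually_all_finset U).mpr fun f hf => (eventually_all_finset U).mpr fun g hg => ?_
  obtain rfl | hne := eq_or_ne f g
  · exact .of_forall fun x => iff_of_false (lt_irrefl _) fun h => hasymm f f h h
  rcases htotal f hf g hg hne with h | h
  · exact (hR f g h).mono fun x hx => iff_of_true hx h
  · exact (hR g f h).mono fun x hx => iff_of_false (lt_asymm hx) (hasymm g f h)

noncomputable def medianLevel (G : Finset (ℝ → ℝ)) (x : ℝ) : ℝ :=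
  kthLargest (G.val.map fun g => g x) ((G.card + 1) / 2)

section MedianLevel

open Finset

variable {G : Finset (ℝ → ℝ)}

theorem continuous_medianLevel (hG : ∀ g ∈ G, Continuous g) (hne : G.Nonempty) :
    Continuous (medianLevel G) := by
  have := hne.card_pos
  exact continuous_kthLargest hG (by omega) (by omega)

theorem exists_mem_eq_medianLevel (hne : G.Nonempty) (x : ℝ) :
    ∃ g ∈ G, g x = medianLevel G x := by
  have := hne.card_pos
  exact Multiset.mem_map.mp
    (kthLargest_mem (by omega) (by rw [Multiset.card_map, card_val]; omega))

theorem eq_medianLevel_iff (hG : Odd #G) {x y : ℝ} :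
    y = medianLevel G x ↔ #{g ∈ G | y < g x} ≤ #G / 2 ∧ #{g ∈ G | g x < y} ≤ #G / 2 := by
  have hcard : Multiset.card (G.val.map fun g => g x) = #G := Multiset.card_map _ _
  have := eq_kthLargest_median_iff (y := y) (hcard ▸ hG)
  rwa [hcard, Multiset.countP_map, Multiset.countP_map] at this

theorem exists_medianLevel_eq_of_order_reversed (hG : Odd #G) {a b : ℝ}
    (hrev : ∀ f ∈ G, ∀ g ∈ G, f a < g a ↔ g b < f b) :
    ∃ g ∈ G, medianLevel G a = g a ∧ medianLevel G b = g b := by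
  obtain ⟨g₀, hg₀, ha⟩ := exists_mem_eq_medianLevel (card_pos.mp hG.pos) a
  obtain ⟨habove, hbelow⟩ := (eq_medianLevel_iff hG).mp ha
  have hbelow' : {g ∈ G | g₀ b < g b} = {g ∈ G | g a < g₀ a} :=
    filter_congr fun g hg => (hrev g hg g₀ hg₀).symm
  have habove' : {g ∈ G | g b < g₀ b} = {g ∈ G | g₀ a < g a} :=
    filter_congr fun g hg => (hrev g₀ hg₀ g hg).symm
  refine ⟨g₀, hg₀, ha.symm, ((eq_medianLevel_iff hG).mpr ?_).symm⟩
  rw [hbelow', habove']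
  exact ⟨hbelow, habove⟩

end MedianLevel

theorem zero_mem_uIcc_sub_of_lt_iff_lt {u v u' v' : ℝ} (h₁ : u < v ↔ v' < u')
    (h₂ : v < u ↔ u' < v') : (0 : ℝ) ∈ uIcc (u - v) (u' - v') := by
  rcases lt_trichotomy u v with h | rfl | h
  · exact mem_uIcc_of_le (by linarith) (by linarith [h₁.mp h])
  · rw [sub_self]
    exact left_mem_uIcc
  · exact mem_uIcc_of_ge (by linarith [h₂.mp h]) (by linarith)

/-- The median levels of two odd-size families of pairwise once-crossing
pseudo-lines have a common point (the dual form of the existence of a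
ham-sandwich cut). -/
theorem median_levels_meet
    (G₁ G₂ : Finset (ℝ → ℝ))
    (hcont : ∀ f ∈ G₁ ∪ G₂, Continuous f)
    (hodd₁ : Odd G₁.card) (hodd₂ : Odd G₂.card)
    (hcross : ∀ f ∈ G₁ ∪ G₂, ∀ g ∈ G₁ ∪ G₂, f ≠ g → CrossesOnce f g) :
    ∃ x : ℝ,
      kthLargest (G₁.val.map (fun g => g x)) ((G₁.card + 1) / 2)
        = kthLargest (G₂.val.map (fun g => g x)) ((G₂.card + 1) / 2) := by
  have hsub₁ : G₁ ⊆ G₁ ∪ G₂ := Finset.subset_union_left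
  have hsub₂ : G₂ ⊆ G₁ ∪ G₂ := Finset.subset_union_right
  obtain ⟨a, hright⟩ := (Finset.eventually_forall_lt_iff (l := atTop)
    (fun _ _ => Prec.eventually_lt_atTop) hcross).exists
  obtain ⟨b, hleft⟩ := (Finset.eventually_forall_lt_iff (l := atBot) (R := fun f g => Prec g f)
    (fun _ _ => Prec.eventually_lt_atBot) fun f hf g hg hfg => (hcross f hf g hg hfg).symm).exists
  have hrev : ∀ f ∈ G₁ ∪ G₂, ∀ g ∈ G₁ ∪ G₂, f a < g a ↔ g b < f b :=
    fun f hf g hg => (hright f hf g hg).trans (hleft g hg f hf).symm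
  obtain ⟨g₁, hg₁, ha₁, hb₁⟩ := exists_medianLevel_eq_of_order_reversed hodd₁
    fun f hf g hg => hrev f (hsub₁ hf) g (hsub₁ hg)
  obtain ⟨g₂, hg₂, ha₂, hb₂⟩ := exists_medianLevel_eq_of_order_reversed hodd₂
    fun f hf g hg => hrev f (hsub₂ hf) g (hsub₂ hg)
  have hsign := zero_mem_uIcc_sub_of_lt_iff_lt (hrev g₁ (hsub₁ hg₁) g₂ (hsub₂ hg₂))
    (hrev g₂ (hsub₂ hg₂) g₁ (hsub₁ hg₁))
  have hcont' : Continuous fun x => medianLevel G₁ x - medianLevel G₂ x :=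
    (continuous_medianLevel (fun g hg => hcont g (hsub₁ hg)) (Finset.card_pos.mp hodd₁.pos)).sub
      (continuous_medianLevel (fun g hg => hcont g (hsub₂ hg)) (Finset.card_pos.mp hodd₂.pos))
  obtain ⟨x, -, hx⟩ := intermediate_value_uIcc (a := a) (b := b) hcont'.continuousOn
    (by simpa only [ha₁, ha₂, hb₁, hb₂] using hsign)
  exact ⟨x, sub_eq_zero.mp hx⟩
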